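/- arXiv:1810.01099 — 4 statements merged into one kernel-verified Lean document; each statement's English description precedes it below -/
import Mathlib

section
/- Let (X_i, F_i)_{i=0,…,n} be martingale differences with E|X_i|^β < ∞ for a constant β ∈ (1, 2] and all 1 ≤ i ≤ n. Define G⁰_k(β) = Σ_{i=1}^k ( E[(X_i⁻)^β | F_{i−1}] + (X_i⁺)^β ) for k ∈ [1, n], where x⁺ = max{x, 0} and x⁻ = (−x)⁺. Then for all x, v > 0: P( S_k ≥ x and G⁰_k(β) ≤ v^β for some k ∈ [1, n] ) ≤ exp( −C(β) (x/v)^{β/(β−1)} ), where C(β) = β^{1/(1−β)} (1 − β^{−1}). -/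
/-!
For `λ ≥ 0` the process `Z_k = exp (λ S_k - λ ^ β G⁰_k(β))` is a nonnegative supermartingale
with `Z_0 = 1`. Indeed, the elementary inequality `exp (t - (t⁺) ^ β) ≤ 1 + t + (t⁻) ^ β`
(valid for `1 ≤ β ≤ 2`) together with `E[X_k | F_{k-1}] = 0` gives
`E[exp (λ X_k - λ ^ β (X_k⁺) ^ β) | F_{k-1}] ≤ 1 + λ ^ β E[(X_k⁻) ^ β | F_{k-1}]`, and
`1 + u ≤ exp u` absorbs the right-hand side into the conditional term of `G⁰_k(β)`.
On the event in question some `Z_k ≥ exp (λ x - λ ^ β v ^ β)`, so Doob's maximal inequality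
bounds its probability by `exp (λ ^ β v ^ β - λ x)`; minimising over `λ` gives `C(β)`.
-/

open MeasureTheory Set

noncomputable section

namespace Real

variable {β l : ℝ}

lemma sq_le_rpow_mul_one_add (hβ1 : 1 ≤ β) (hβ2 : β ≤ 2) {u : ℝ} (hu : 0 ≤ u) :
    u ^ 2 ≤ u ^ β * (1 + u) := by
  have hβ0 : 0 ≤ u ^ β := rpow_nonneg hu β
  rcases le_total u 1 with h | h
  · have : u ^ (2 : ℝ) ≤ u ^ β := rpow_le_rpow_of_exponent_ge' hu h (by linarith) hβ2
    rw [rpow_two] at this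
    nlinarith
  · have : u ≤ u ^ β := self_le_rpow_of_one_le h hβ1
    nlinarith

lemma exp_sub_rpow_le_one_add (hβ1 : 1 ≤ β) (hβ2 : β ≤ 2) {u : ℝ} (hu : 0 ≤ u) :
    exp (u - u ^ β) ≤ 1 + u := by
  have h1u : 0 < 1 + u := by linarith
  rw [← le_log_iff_exp_le h1u]
  calc u - u ^ β ≤ 1 - (1 + u)⁻¹ := by
        rw [← sub_nonneg]
        have := sq_le_rpow_mul_one_add hβ1 hβ2 hu
        field_simp
        nlinarith
    _ ≤ log (1 + u) := one_sub_inv_le_log_of_pos h1u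

lemma exp_neg_le_one_sub_add_rpow (hβ1 : 1 ≤ β) (hβ2 : β ≤ 2) {u : ℝ} (hu : 0 ≤ u) :
    exp (-u) ≤ 1 - u + u ^ β := by
  have h1u : 0 < 1 + u := by linarith
  calc exp (-u) ≤ (1 + u)⁻¹ := by
        rw [exp_neg]
        exact inv_anti₀ h1u (by linarith [add_one_le_exp u])
    _ ≤ 1 - u + u ^ β := by
        rw [inv_le_iff_one_le_mul₀ h1u]
        nlinarith [sq_le_rpow_mul_one_add hβ1 hβ2 hu]

lemma exp_sub_rpow_max_le (hβ1 : 1 ≤ β) (hβ2 : β ≤ 2) (t : ℝ) :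
    exp (t - max t 0 ^ β) ≤ 1 + t + max (-t) 0 ^ β := by
  rcases le_total 0 t with ht | ht
  · rw [max_eq_left ht, max_eq_right (by linarith), zero_rpow (by linarith), add_zero]
    exact exp_sub_rpow_le_one_add hβ1 hβ2 ht
  · rw [max_eq_right ht, max_eq_left (by linarith), zero_rpow (by linarith), sub_zero]
    simpa [sub_eq_add_neg] using exp_neg_le_one_sub_add_rpow hβ1 hβ2 (neg_nonneg.2 ht)

lemma sub_rpow_max_le_one (hβ1 : 1 ≤ β) (t : ℝ) : t - max t 0 ^ β ≤ 1 := by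
  have ht : t ≤ max t 0 := le_max_left t 0
  rcases le_total (max t 0) 1 with h | h
  · linarith [rpow_nonneg (le_max_right t 0) β]
  · linarith [self_le_rpow_of_one_le h hβ1]

lemma exp_neg_mul_one_add_le_one (u : ℝ) : exp (-u) * (1 + u) ≤ 1 := by
  rcases le_total (1 + u) 0 with h | h
  · nlinarith [exp_pos (-u)]
  · calc exp (-u) * (1 + u) ≤ exp (-u) * exp u :=
          mul_le_mul_of_nonneg_left (by linarith [add_one_le_exp u]) (exp_pos _).le
      _ = 1 := by rw [← exp_add, neg_add_cancel, exp_zero]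

/-- The value of `t ↦ t ^ β - a t` at its minimiser `t = (a / β) ^ (1 / (β - 1))`. -/
lemma rpow_sub_mul_at_critical (hβ : 1 < β) {a : ℝ} (ha : 0 < a) :
    ((a / β) ^ (1 / (β - 1))) ^ β - (a / β) ^ (1 / (β - 1)) * a =
      -(β ^ (1 / (1 - β)) * (1 - β⁻¹)) * a ^ (β / (β - 1)) := by
  have hβ0 : 0 < β := by linarith
  have hβ1 : β - 1 ≠ 0 := by linarith
  have hβ1' : 1 - β ≠ 0 := by linarith
  set t := (a / β) ^ (1 / (β - 1)) with ht
  have ht0 : 0 < t := by positivity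
  have hpow : t ^ (β - 1) = a / β := by
    rw [ht, ← rpow_mul (by positivity), one_div_mul_cancel hβ1, rpow_one]
  have htβ : t ^ β = t * (a / β) := by
    rw [← hpow, mul_comm, ← rpow_add_one ht0.ne', sub_add_cancel]
  have hta : t * a = β ^ (1 / (1 - β)) * a ^ (β / (β - 1)) := by
    rw [ht, div_rpow ha.le hβ0.le, show β / (β - 1) = 1 / (β - 1) + 1 by field_simp; ring,
      rpow_add_one ha.ne', show 1 / (1 - β) = -(1 / (β - 1)) by field_simp; ring,
      rpow_neg hβ0.le]
    field_simp
  rw [htβ, show t * (a / β) - t * a = -(t * a) * (1 - β⁻¹) by field_simp; ring, hta]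
  ring

lemma max_mul_zero_rpow (hl : 0 ≤ l) (t : ℝ) : max (l * t) 0 ^ β = l ^ β * max t 0 ^ β := by
  rw [show max (l * t) 0 = l * max t 0 by rw [mul_max_of_nonneg _ _ hl, mul_zero],
    mul_rpow hl (le_max_right _ _)]

lemma exp_mul_sub_rpow_max_le (hβ1 : 1 ≤ β) (hβ2 : β ≤ 2) (hl : 0 ≤ l) (t : ℝ) :
    exp (l * t - l ^ β * max t 0 ^ β) ≤ 1 + l * t + l ^ β * max (-t) 0 ^ β := by
  have h := exp_sub_rpow_max_le hβ1 hβ2 (l * t)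
  rwa [max_mul_zero_rpow hl, ← mul_neg, max_mul_zero_rpow hl] at h

lemma mul_sub_rpow_max_le_one (hβ1 : 1 ≤ β) (hl : 0 ≤ l) (t : ℝ) :
    l * t - l ^ β * max t 0 ^ β ≤ 1 := by
  simpa only [max_mul_zero_rpow hl] using sub_rpow_max_le_one hβ1 (l * t)

end Real

open Real

namespace MeasureTheory

section Maximal

variable {Ω : Type*} {m0 : MeasurableSpace Ω} {μ : Measure Ω} [IsFiniteMeasure μ]
  {𝒢 : Filtration ℕ m0} {f : ℕ → Ω → ℝ}

/-- Doob's maximal inequality for nonnegative supermartingales, by optional stopping at the first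
time `f` reaches `ε`. -/
theorem Supermartingale.measure_exists_le_le_div (hf : Supermartingale f 𝒢 μ) (hnonneg : 0 ≤ f)
    (n : ℕ) {ε : ℝ} (hε : 0 < ε) :
    μ {ω | ∃ k ≤ n, ε ≤ f k ω} ≤ ENNReal.ofReal ((∫ ω, f 0 ω ∂μ) / ε) := by
  set τ : Ω → ℕ∞ := fun ω ↦ (hittingBtwn f (Ici ε) 0 n ω : ℕ)
  have hτ : IsStoppingTime 𝒢 τ :=
    hf.stronglyAdapted.adapted.isStoppingTime_hittingBtwn measurableSet_Ici
  have hτn : ∀ ω, τ ω ≤ n := fun ω ↦ ENat.natCast_le_natCast.2 (hittingBtwn_le ω)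
  have hstop : ∫ ω, stoppedValue f τ ω ∂μ ≤ ∫ ω, f 0 ω ∂μ := by
    have := hf.neg.expected_stoppedValue_mono (isStoppingTime_const 𝒢 0) hτ (fun ω ↦ zero_le) hτn
    simpa [stoppedValue, integral_neg] using this
  have hsub : {ω | ∃ k ≤ n, ε ≤ f k ω} ⊆ {ω | ε ≤ stoppedValue f τ ω} :=
    fun ω ⟨k, hk, hfk⟩ ↦ stoppedValue_hittingBtwn_mem ⟨k, ⟨zero_le, hk⟩, hfk⟩
  have hmarkov : ε * μ.real {ω | ε ≤ stoppedValue f τ ω} ≤ ∫ ω, stoppedValue f τ ω ∂μ :=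
    mul_meas_ge_le_integral_of_nonneg (ae_of_all _ fun ω ↦ hnonneg _ ω)
    (integrable_stoppedValue ℕ hτ hf.integrable hτn) ε
  calc μ {ω | ∃ k ≤ n, ε ≤ f k ω} ≤ μ {ω | ε ≤ stoppedValue f τ ω} := measure_mono hsub
    _ = ENNReal.ofReal (μ.real {ω | ε ≤ stoppedValue f τ ω}) :=
        (ofReal_measureReal (measure_ne_top _ _)).symm
    _ ≤ ENNReal.ofReal ((∫ ω, f 0 ω ∂μ) / ε) :=
        ENNReal.ofReal_le_ofReal (by rw [le_div_iff₀ hε]; linarith)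

theorem supermartingale_min_of_condExp_succ_le {n : ℕ}
    (hadapt : ∀ k ≤ n, StronglyMeasurable[𝒢 k] (f k)) (hint : ∀ k ≤ n, Integrable (f k) μ)
    (hstep : ∀ k < n, μ[f (k + 1)|𝒢 k] ≤ᵐ[μ] f k) :
    Supermartingale (fun k ↦ f (min k n)) 𝒢 μ := by
  refine supermartingale_nat (fun k ↦ (hadapt _ (min_le_right _ _)).mono (𝒢.mono (min_le_left _ _)))
    (fun k ↦ hint _ (min_le_right _ _)) fun k ↦ ?_
  rcases lt_or_ge k n with h | h
  · rw [min_eq_left h.le, min_eq_left h]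
    exact hstep k h
  · rw [min_eq_right h, min_eq_right (by omega),
      condExp_of_stronglyMeasurable (𝒢.le k) ((hadapt n le_rfl).mono (𝒢.mono h)) (hint n le_rfl)]

theorem measure_exists_le_le_div_of_condExp_succ_le {n : ℕ}
    (hadapt : ∀ k ≤ n, StronglyMeasurable[𝒢 k] (f k)) (hint : ∀ k ≤ n, Integrable (f k) μ)
    (hstep : ∀ k < n, μ[f (k + 1)|𝒢 k] ≤ᵐ[μ] f k) (hnonneg : ∀ k ≤ n, 0 ≤ f k)
    {ε : ℝ} (hε : 0 < ε) :
    μ {ω | ∃ k ≤ n, ε ≤ f k ω} ≤ ENNReal.ofReal ((∫ ω, f 0 ω ∂μ) / ε) := by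
  have := (supermartingale_min_of_condExp_succ_le hadapt hint hstep).measure_exists_le_le_div
    (fun k ↦ hnonneg _ (min_le_right k n)) n hε
  convert this using 4 with ω
  · exact exists_congr fun k ↦ and_congr_right fun hk ↦ by rw [min_eq_left hk]
  · rw [Nat.zero_min]

end Maximal

section OneStep

variable {Ω : Type*} {m m0 : MeasurableSpace Ω} {P : Measure Ω} {β l : ℝ} {ξ : Ω → ℝ}

lemma integrable_max_neg_zero_rpow (hξ : AEMeasurable ξ P) (hβ : 0 ≤ β)
    (h : Integrable (fun ω ↦ |ξ ω| ^ β) P) : Integrable (fun ω ↦ max (-ξ ω) 0 ^ β) P := by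
  refine h.mono' (by fun_prop) (ae_of_all _ fun ω ↦ ?_)
  rw [norm_of_nonneg (rpow_nonneg (le_max_right _ _) _)]
  exact rpow_le_rpow (le_max_right _ _) (max_le (neg_le_abs _) (abs_nonneg _)) hβ

lemma integrable_exp_mul_sub_rpow_max [IsFiniteMeasure P] (hξ : AEMeasurable ξ P) (hβ1 : 1 ≤ β)
    (hl : 0 ≤ l) : Integrable (fun ω ↦ exp (l * ξ ω - l ^ β * max (ξ ω) 0 ^ β)) P := by
  refine Integrable.of_bound (by fun_prop (disch := linarith)) (exp 1) (ae_of_all _ fun ω ↦ ?_)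
  rw [norm_of_nonneg (exp_pos _).le]
  exact exp_le_exp.2 (mul_sub_rpow_max_le_one hβ1 hl (ξ ω))

lemma condExp_exp_mul_sub_rpow_max_le [IsFiniteMeasure P] (hm : m ≤ m0) (hβ1 : 1 ≤ β)
    (hβ2 : β ≤ 2) (hl : 0 ≤ l) (hξ : Integrable ξ P) (hξ0 : P[ξ|m] =ᵐ[P] 0)
    (hneg : Integrable (fun ω ↦ max (-ξ ω) 0 ^ β) P) :
    P[fun ω ↦ exp (l * ξ ω - l ^ β * max (ξ ω) 0 ^ β)|m] ≤ᵐ[P]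
      fun ω ↦ 1 + l ^ β * P[fun ω ↦ max (-ξ ω) 0 ^ β|m] ω := by
  set g : Ω → ℝ := fun ω ↦ max (-ξ ω) 0 ^ β
  have hlin : Integrable ((fun _ ↦ (1 : ℝ)) + l • ξ) P := (integrable_const 1).add (hξ.smul l)
  have hmono : P[fun ω ↦ exp (l * ξ ω - l ^ β * max (ξ ω) 0 ^ β)|m] ≤ᵐ[P]
      P[(fun _ ↦ (1 : ℝ)) + l • ξ + l ^ β • g|m] :=
    condExp_mono (integrable_exp_mul_sub_rpow_max hξ.aemeasurable hβ1 hl)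
      (hlin.add (hneg.smul (l ^ β))) (ae_of_all _ fun ω ↦ exp_mul_sub_rpow_max_le hβ1 hβ2 hl (ξ ω))
  filter_upwards [hmono, condExp_add hlin (hneg.smul (l ^ β)) m,
    condExp_add (integrable_const 1) (hξ.smul l) m, condExp_smul l ξ m, condExp_smul (l ^ β) g m,
    hξ0] with ω h h1 h2 h3 h4 h5
  rw [h1, Pi.add_apply, h2, Pi.add_apply, h3, h4, condExp_const hm] at h
  simpa [h5] using h

def expIncrement (P : Measure Ω) (m : MeasurableSpace Ω) (β l : ℝ) (ξ : Ω → ℝ) (ω : Ω) : ℝ :=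
  exp (l * ξ ω - l ^ β * (P[fun ω' ↦ max (-ξ ω') 0 ^ β|m] ω + max (ξ ω) 0 ^ β))

lemma expIncrement_le_exp_one (hβ1 : 1 ≤ β) (hl : 0 ≤ l) :
    ∀ᵐ ω ∂P, expIncrement P m β l ξ ω ≤ exp 1 := by
  have hE : 0 ≤ᵐ[P] P[fun ω' ↦ max (-ξ ω') 0 ^ β|m] :=
    condExp_nonneg (ae_of_all _ fun ω ↦ rpow_nonneg (le_max_right _ _) β)
  filter_upwards [hE] with ω hEω
  have := mul_nonneg (rpow_nonneg hl β) hEω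
  exact exp_le_exp.2 (by linarith [mul_sub_rpow_max_le_one hβ1 hl (ξ ω)])

lemma Integrable.mul_expIncrement {Y : Ω → ℝ} (hY : Integrable Y P) (hξ : AEMeasurable ξ P)
    (hβ1 : 1 ≤ β) (hl : 0 ≤ l) : Integrable (fun ω ↦ Y ω * expIncrement P m β l ξ ω) P := by
  refine hY.mul_bdd (c := exp 1) ?_ ?_
  · have hE : AEMeasurable (P[fun ω' ↦ max (-ξ ω') 0 ^ β|m]) P :=
      integrable_condExp.aestronglyMeasurable.aemeasurable
    unfold expIncrement
    exact AEMeasurable.aestronglyMeasurable (by fun_prop)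
  · filter_upwards [expIncrement_le_exp_one (m := m) (ξ := ξ) hβ1 hl] with ω hω
    exact (norm_of_nonneg (exp_pos _).le).trans_le hω

lemma condExp_mul_expIncrement_le [IsFiniteMeasure P] (hm : m ≤ m0) (hβ1 : 1 ≤ β) (hβ2 : β ≤ 2)
    (hl : 0 ≤ l) (hξ : Integrable ξ P) (hξ0 : P[ξ|m] =ᵐ[P] 0)
    (hneg : Integrable (fun ω ↦ max (-ξ ω) 0 ^ β) P)
    {Y : Ω → ℝ} (hYm : StronglyMeasurable[m] Y) (hY0 : 0 ≤ Y) (hY : Integrable Y P) :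
    P[fun ω ↦ Y ω * expIncrement P m β l ξ ω|m] ≤ᵐ[P] Y := by
  set E := P[fun ω ↦ max (-ξ ω) 0 ^ β|m]
  set V : Ω → ℝ := fun ω ↦ exp (l * ξ ω - l ^ β * max (ξ ω) 0 ^ β)
  set W : Ω → ℝ := fun ω ↦ Y ω * exp (-(l ^ β * E ω))
  have hWV : (fun ω ↦ Y ω * expIncrement P m β l ξ ω) = W * V := by
    ext ω
    simp only [expIncrement, W, V, E, Pi.mul_apply, mul_assoc, ← exp_add]
    ring_nf
  have hW : StronglyMeasurable[m] W :=
    hYm.mul (continuous_exp.comp_stronglyMeasurable (stronglyMeasurable_condExp.const_mul _).neg)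
  rw [hWV]
  filter_upwards [condExp_mul_of_stronglyMeasurable_left hW
      (hWV ▸ hY.mul_expIncrement hξ.aemeasurable hβ1 hl)
      (integrable_exp_mul_sub_rpow_max hξ.aemeasurable hβ1 hl),
    condExp_exp_mul_sub_rpow_max_le hm hβ1 hβ2 hl hξ hξ0 hneg] with ω h1 h2
  rw [h1, Pi.mul_apply]
  calc W ω * P[V|m] ω ≤ W ω * (1 + l ^ β * E ω) :=
        mul_le_mul_of_nonneg_left h2 (mul_nonneg (hY0 ω) (exp_pos _).le)
    _ = Y ω * (exp (-(l ^ β * E ω)) * (1 + l ^ β * E ω)) := mul_assoc _ _ _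
    _ ≤ Y ω := mul_le_of_le_one_right (hY0 ω) (exp_neg_mul_one_add_le_one _)

end OneStep

section ExpProcess

variable {Ω : Type*} {m0 : MeasurableSpace Ω} {P : Measure Ω} {ℱ : Filtration ℕ m0}
  {X : ℕ → Ω → ℝ} {n : ℕ} {β l : ℝ}

def partialSum (X : ℕ → Ω → ℝ) (k : ℕ) (ω : Ω) : ℝ := ∑ i ∈ Finset.Icc 1 k, X i ω

-- `G⁰_k(β)` of the informal statement.
def powerVariation (P : Measure Ω) (X : ℕ → Ω → ℝ) (ℱ : ℕ → MeasurableSpace Ω) (β : ℝ) (k : ℕ)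
    (ω : Ω) : ℝ :=
  ∑ i ∈ Finset.Icc 1 k, (P[fun ω' ↦ max (-X i ω') 0 ^ β|ℱ (i - 1)] ω + max (X i ω) 0 ^ β)

def expProcess (P : Measure Ω) (X : ℕ → Ω → ℝ) (ℱ : ℕ → MeasurableSpace Ω) (β l : ℝ) (k : ℕ)
    (ω : Ω) : ℝ :=
  exp (l * partialSum X k ω - l ^ β * powerVariation P X ℱ β k ω)

lemma expProcess_zero : expProcess P X ℱ β l 0 = 1 := by
  ext ω
  simp [expProcess, partialSum, powerVariation]

lemma expProcess_succ (k : ℕ) :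
    expProcess P X ℱ β l (k + 1) =
      fun ω ↦ expProcess P X ℱ β l k ω * expIncrement P (ℱ k) β l (X (k + 1)) ω := by
  ext ω
  simp only [expProcess, expIncrement, partialSum, powerVariation,
    Finset.sum_Icc_succ_top (Nat.le_add_left 1 k), Nat.add_sub_cancel, ← exp_add]
  ring_nf

lemma stronglyMeasurable_expProcess (hadapt : ∀ i ∈ Finset.Icc 1 n, Measurable[ℱ i] (X i))
    {k : ℕ} (hk : k ≤ n) : StronglyMeasurable[ℱ k] (expProcess P X ℱ β l k) := by
  have hX : ∀ i ∈ Finset.Icc 1 k, Measurable[ℱ k] (X i) := fun i hi ↦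
    (hadapt i (Finset.Icc_subset_Icc_right hk hi)).mono (ℱ.mono (Finset.mem_Icc.1 hi).2) le_rfl
  have hE : ∀ i ∈ Finset.Icc 1 k, Measurable[ℱ k] (P[fun ω' ↦ max (-X i ω') 0 ^ β|ℱ (i - 1)]) :=
    fun i hi ↦ stronglyMeasurable_condExp.measurable.mono (ℱ.mono (by grind)) le_rfl
  refine (continuous_exp.measurable.comp ?_).stronglyMeasurable
  refine ((Finset.measurable_sum _ hX).const_mul l).sub (Measurable.const_mul ?_ _)
  exact Finset.measurable_sum _ fun i hi ↦
    (hE i hi).add (((hX i hi).max measurable_const).pow_const β)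

lemma integrable_expProcess [IsFiniteMeasure P] (hβ1 : 1 ≤ β) (hl : 0 ≤ l)
    (hint : ∀ i ∈ Finset.Icc 1 n, Integrable (X i) P) {k : ℕ} (hk : k ≤ n) :
    Integrable (expProcess P X ℱ β l k) P := by
  induction k with
  | zero => exact expProcess_zero (P := P) ▸ integrable_const 1
  | succ k ih =>
    rw [expProcess_succ]
    exact (ih (by omega)).mul_expIncrement (hint (k + 1) (by grind)).aemeasurable hβ1 hl

lemma condExp_expProcess_succ_le [IsFiniteMeasure P] (hβ1 : 1 ≤ β) (hβ2 : β ≤ 2) (hl : 0 ≤ l)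
    (hadapt : ∀ i ∈ Finset.Icc 1 n, Measurable[ℱ i] (X i))
    (hint : ∀ i ∈ Finset.Icc 1 n, Integrable (X i) P)
    (hmd : ∀ i ∈ Finset.Icc 1 n, P[X i|ℱ (i - 1)] =ᵐ[P] 0)
    (hneg : ∀ i ∈ Finset.Icc 1 n, Integrable (fun ω ↦ max (-X i ω) 0 ^ β) P)
    {k : ℕ} (hk : k < n) :
    P[expProcess P X ℱ β l (k + 1)|ℱ k] ≤ᵐ[P] expProcess P X ℱ β l k := by
  have hk1 : k + 1 ∈ Finset.Icc 1 n := by grind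
  rw [expProcess_succ]
  exact condExp_mul_expIncrement_le (ℱ.le k) hβ1 hβ2 hl (hint _ hk1) (by simpa using hmd _ hk1)
    (hneg _ hk1) (stronglyMeasurable_expProcess hadapt hk.le) (fun ω ↦ (exp_pos _).le)
    (integrable_expProcess hβ1 hl hint hk.le)

theorem measure_exists_le_partialSum_le_exp [IsProbabilityMeasure P] (hβ1 : 1 ≤ β)
    (hβ2 : β ≤ 2) (hl : 0 ≤ l) (hadapt : ∀ i ∈ Finset.Icc 1 n, Measurable[ℱ i] (X i))
    (hint : ∀ i ∈ Finset.Icc 1 n, Integrable (X i) P)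
    (hmd : ∀ i ∈ Finset.Icc 1 n, P[X i|ℱ (i - 1)] =ᵐ[P] 0)
    (hneg : ∀ i ∈ Finset.Icc 1 n, Integrable (fun ω ↦ max (-X i ω) 0 ^ β) P) (x v : ℝ) :
    P {ω | ∃ k ∈ Finset.Icc 1 n, x ≤ partialSum X k ω ∧ powerVariation P X ℱ β k ω ≤ v ^ β} ≤
      ENNReal.ofReal (exp (l ^ β * v ^ β - l * x)) := by
  have hsub : {ω | ∃ k ∈ Finset.Icc 1 n, x ≤ partialSum X k ω ∧ powerVariation P X ℱ β k ω ≤ v ^ β}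
      ⊆ {ω | ∃ k ≤ n, exp (l * x - l ^ β * v ^ β) ≤ expProcess P X ℱ β l k ω} := by
    rintro ω ⟨k, hk, hxS, hGv⟩
    refine ⟨k, (Finset.mem_Icc.1 hk).2, exp_le_exp.2 ?_⟩
    have := mul_le_mul_of_nonneg_left hxS hl
    have := mul_le_mul_of_nonneg_left hGv (rpow_nonneg hl β)
    linarith
  refine (measure_mono hsub).trans ((measure_exists_le_le_div_of_condExp_succ_le
    (fun k hk ↦ stronglyMeasurable_expProcess hadapt hk)
    (fun k hk ↦ integrable_expProcess hβ1 hl hint hk)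
    (fun k hk ↦ condExp_expProcess_succ_le hβ1 hβ2 hl hadapt hint hmd hneg hk)
    (fun k _ ω ↦ (exp_pos _).le) (exp_pos _)).trans_eq ?_)
  simp [expProcess_zero, ← exp_neg]

end ExpProcess

end MeasureTheory

/-- Exponential inequality for martingales (Fan et al. 2017, Theorem 2.2):
if `G⁰_k(β) = ∑_{i=1}^k (E[(X_i⁻)^β | F_{i-1}] + (X_i⁺)^β)`, then for all `x, v > 0`,
`P(S_k ≥ x and G⁰_k(β) ≤ v^β for some k ∈ [1,n]) ≤ exp(-C(β) (x/v)^{β/(β-1)})`,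
where `C(β) = β^{1/(1-β)} (1 - β⁻¹)`. -/
theorem martingale_exponential_inequality
    {Ω : Type*} [MeasurableSpace Ω] (P : Measure Ω) [IsProbabilityMeasure P]
    (n : ℕ) (X : ℕ → Ω → ℝ) (ℱ : ℕ → MeasurableSpace Ω) (β : ℝ)
    (hβ : β ∈ Set.Ioc (1 : ℝ) 2)
    (hmono : ∀ i j, i ≤ j → ℱ i ≤ ℱ j)
    (hle : ∀ i, ℱ i ≤ ‹MeasurableSpace Ω›)
    (hadapt : ∀ i ∈ Finset.Icc 1 n, Measurable[ℱ i] (X i))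
    (hint : ∀ i ∈ Finset.Icc 1 n, Integrable (X i) P)
    (hmd : ∀ i ∈ Finset.Icc 1 n, P[X i|ℱ (i - 1)] =ᵐ[P] 0)
    (hmom : ∀ i ∈ Finset.Icc 1 n, Integrable (fun ω => |X i ω| ^ β) P)
    (x v : ℝ) (hx : 0 < x) (hv : 0 < v) :
    P {ω | ∃ k ∈ Finset.Icc 1 n,
        x ≤ ∑ i ∈ Finset.Icc 1 k, X i ω ∧
        (∑ i ∈ Finset.Icc 1 k,
          ((P[fun ω' => (max (-(X i ω')) 0) ^ β|ℱ (i - 1)]) ω +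
            (max (X i ω) 0) ^ β)) ≤ v ^ β} ≤
      ENNReal.ofReal
        (Real.exp (-(β ^ ((1 : ℝ) / (1 - β)) * (1 - β⁻¹)) * (x / v) ^ (β / (β - 1)))) := by
  obtain ⟨hβ1, hβ2⟩ := hβ
  let 𝓕 : Filtration ℕ ‹MeasurableSpace Ω› := ⟨ℱ, fun i j ↦ hmono i j, hle⟩
  have hneg : ∀ i ∈ Finset.Icc 1 n, Integrable (fun ω ↦ max (-X i ω) 0 ^ β) P := fun i hi ↦
    integrable_max_neg_zero_rpow (hint i hi).aemeasurable (by linarith) (hmom i hi)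
  set t := (x / v / β) ^ (1 / (β - 1))
  have hexp : (t / v) ^ β * v ^ β - t / v * x =
      -(β ^ ((1 : ℝ) / (1 - β)) * (1 - β⁻¹)) * (x / v) ^ (β / (β - 1)) := by
    rw [← mul_rpow (by positivity) hv.le, div_mul_cancel₀ _ hv.ne',
      show t / v * x = t * (x / v) by ring]
    exact rpow_sub_mul_at_critical hβ1 (div_pos hx hv)
  have hbound := measure_exists_le_partialSum_le_exp (ℱ := 𝓕) (l := t / v) hβ1.le hβ2
    (by positivity) hadapt hint hmd hneg x v
  rwa [hexp] at hbound

end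
end

section
/- Let F and G be sub-σ-fields of F on a probability space (Ω, F, P), and let ψ ≥ 0 be such that |P(A | F) − P(A)| ≤ ψ P(A) almost surely for every A ∈ G. If X is G-measurable, Y is F-measurable, E|X| < ∞, E|Y| < ∞, and XY is integrable, then |E[XY] − E[X] E[Y]| ≤ ψ · E|X| · E|Y|. Moreover, if additionally E X² < ∞ and E Y² < ∞, then |E[XY] − E[X] E[Y]| ≤ ψ (E X²)^{1/2} (E Y²)^{1/2}. -/
/-!
Conditioning `1_A` on `𝔽` and pulling out the `𝔽`-measurable `Y` gives
`|E[1_A Y] - P(A) E Y| ≤ ψ P(A) E|Y|` for every `A ∈ 𝔾`. As a bound on the integrals of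
`E[Y | 𝔾] - E Y` over `𝔾`-sets this says `|E[Y | 𝔾] - E Y| ≤ ψ E|Y|` a.s. Conditioning on `𝔾`
and pulling out `X` then gives `|E[XY] - E X E Y| = |E[X (E[Y | 𝔾] - E Y)]| ≤ ψ E|X| E|Y|`.
The second bound follows from `E|X| ≤ √(E X²)`, i.e. from `Var |X| ≥ 0`.
-/

open MeasureTheory ProbabilityTheory

section

variable {Ω : Type*} {m m0 : MeasurableSpace Ω} {μ : Measure Ω}

theorem ae_abs_le_of_forall_abs_setIntegral_le [IsFiniteMeasure μ] (hm : m ≤ m0) {f : Ω → ℝ}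
    (hf : StronglyMeasurable[m] f) (hfi : Integrable f μ) {K : ℝ}
    (hK : ∀ s, MeasurableSet[m] s → |∫ ω in s, f ω ∂μ| ≤ K * μ.real s) :
    ∀ᵐ ω ∂μ, |f ω| ≤ K := by
  have hfi' : Integrable f (μ.trim hm) := hfi.trim hm hf
  have hK' : ∀ s, MeasurableSet[m] s →
      |∫ ω in s, f ω ∂μ.trim hm| ≤ ∫ _ in s, K ∂μ.trim hm := by
    intro s hs
    rw [← setIntegral_trim hm hf hs, setIntegral_const, smul_eq_mul, measureReal_def,
      trim_measurableSet_eq hm hs, mul_comm, ← measureReal_def]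
    exact hK s hs
  have hupper : f ≤ᵐ[μ.trim hm] fun _ => K :=
    ae_le_of_forall_setIntegral_le hfi' (integrable_const K) fun s hs _ =>
      (le_abs_self _).trans (hK' s hs)
  have hlower : (fun _ => -K) ≤ᵐ[μ.trim hm] f := by
    refine ae_le_of_forall_setIntegral_le (integrable_const _) hfi' fun s hs _ => ?_
    rw [integral_neg]
    exact neg_le_of_abs_le (hK' s hs)
  refine ae_of_ae_trim hm ?_
  filter_upwards [hupper, hlower] with ω h₁ h₂ using abs_le.2 ⟨h₂, h₁⟩

theorem abs_integral_mul_sub_le_of_ae_abs_condExp_sub_le [IsFiniteMeasure μ] (hm : m ≤ m0)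
    {f g : Ω → ℝ} (hg : StronglyMeasurable[m] g) (hf : Integrable f μ) (hgi : Integrable g μ)
    (hfg : Integrable (fun ω => f ω * g ω) μ) {c K : ℝ} (hK : ∀ᵐ ω ∂μ, |μ[f|m] ω - c| ≤ K) :
    |∫ ω, f ω * g ω ∂μ - c * ∫ ω, g ω ∂μ| ≤ K * ∫ ω, |g ω| ∂μ := by
  have hpull : μ[f * g|m] =ᵐ[μ] μ[f|m] * g :=
    condExp_mul_of_stronglyMeasurable_right hg hfg hf
  have hprod : Integrable (fun ω => μ[f|m] ω * g ω) μ := integrable_condExp.congr hpull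
  have hint : Integrable (fun ω => (μ[f|m] ω - c) * g ω) μ := by
    simpa only [sub_mul, Pi.sub_def] using hprod.sub (hgi.const_mul c)
  calc |∫ ω, f ω * g ω ∂μ - c * ∫ ω, g ω ∂μ|
      = |∫ ω, (μ[f|m] ω - c) * g ω ∂μ| := by
        have hfg_eq : ∫ ω, f ω * g ω ∂μ = ∫ ω, μ[f|m] ω * g ω ∂μ := by
          rw [← integral_condExp hm]
          exact integral_congr_ae hpull
        have hsplit : ∫ ω, (μ[f|m] ω - c) * g ω ∂μ =
            ∫ ω, μ[f|m] ω * g ω ∂μ - c * ∫ ω, g ω ∂μ := by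
          simp_rw [sub_mul]
          rw [integral_sub hprod (hgi.const_mul c), integral_const_mul]
        rw [hfg_eq, hsplit]
    _ ≤ ∫ ω, K * |g ω| ∂μ := by
        refine abs_integral_le_integral_abs.trans
          (integral_mono_ae hint.abs (hgi.abs.const_mul K) ?_)
        filter_upwards [hK] with ω hω
        rw [abs_mul]
        exact mul_le_mul_of_nonneg_right hω (abs_nonneg _)
    _ = K * ∫ ω, |g ω| ∂μ := integral_const_mul K _

theorem integral_abs_le_sqrt_integral_sq [IsProbabilityMeasure μ] {f : Ω → ℝ}
    (hf : MemLp f 2 μ) :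
    ∫ ω, |f ω| ∂μ ≤ Real.sqrt (∫ ω, f ω ^ 2 ∂μ) := by
  refine Real.le_sqrt_of_sq_le ?_
  have hvar := variance_nonneg |f| μ
  simpa only [variance_eq_sub hf.abs, Pi.pow_apply, Pi.abs_apply, sq_abs, sub_nonneg] using hvar

end

def IsPsiMixing {Ω : Type*} {m0 : MeasurableSpace Ω} (P : Measure Ω) (𝔽 𝔾 : MeasurableSpace Ω)
    (ψ : ℝ) : Prop :=
  ∀ A : Set Ω, MeasurableSet[𝔾] A →
    ∀ᵐ ω ∂P, |(P[A.indicator (fun _ => (1 : ℝ))|𝔽]) ω - (P A).toReal| ≤ ψ * (P A).toReal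

namespace IsPsiMixing

variable {Ω : Type*} {𝔽 𝔾 m0 : MeasurableSpace Ω} {P : Measure Ω}
  [IsFiniteMeasure P] {ψ : ℝ} {Y : Ω → ℝ}

theorem abs_setIntegral_sub_le (hmix : IsPsiMixing P 𝔽 𝔾 ψ) (h𝔽 : 𝔽 ≤ m0) (h𝔾 : 𝔾 ≤ m0)
    (hY : Measurable[𝔽] Y) (hYi : Integrable Y P) {A : Set Ω} (hA : MeasurableSet[𝔾] A) :
    |∫ ω in A, Y ω ∂P - P.real A * ∫ ω, Y ω ∂P| ≤ ψ * P.real A * ∫ ω, |Y ω| ∂P := by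
  have hA₀ : MeasurableSet[m0] A := h𝔾 A hA
  have hind : (fun ω => A.indicator (fun _ => (1 : ℝ)) ω * Y ω) = A.indicator Y := by
    ext ω
    by_cases hω : ω ∈ A <;> simp [hω]
  have key := abs_integral_mul_sub_le_of_ae_abs_condExp_sub_le h𝔽 hY.stronglyMeasurable
    ((integrable_const 1).indicator hA₀) hYi (hind ▸ hYi.indicator hA₀) (hmix A hA)
  rwa [hind, integral_indicator hA₀, ← measureReal_def] at key

theorem ae_abs_condExp_sub_integral_le (hmix : IsPsiMixing P 𝔽 𝔾 ψ) (h𝔽 : 𝔽 ≤ m0)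
    (h𝔾 : 𝔾 ≤ m0) (hY : Measurable[𝔽] Y) (hYi : Integrable Y P) :
    ∀ᵐ ω ∂P, |P[Y|𝔾] ω - ∫ ω, Y ω ∂P| ≤ ψ * ∫ ω, |Y ω| ∂P := by
  refine ae_abs_le_of_forall_abs_setIntegral_le (f := fun ω => P[Y|𝔾] ω - ∫ ω, Y ω ∂P) h𝔾
    (stronglyMeasurable_condExp.sub stronglyMeasurable_const)
    (integrable_condExp.sub (integrable_const _)) fun A hA => ?_
  rw [integral_sub integrable_condExp.integrableOn (integrable_const _).integrableOn,
    setIntegral_condExp h𝔾 hYi hA, setIntegral_const, smul_eq_mul]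
  calc _ ≤ ψ * P.real A * ∫ ω, |Y ω| ∂P := hmix.abs_setIntegral_sub_le h𝔽 h𝔾 hY hYi hA
    _ = _ := by ring

theorem abs_integral_mul_sub_le (hmix : IsPsiMixing P 𝔽 𝔾 ψ) (h𝔽 : 𝔽 ≤ m0) (h𝔾 : 𝔾 ≤ m0)
    {X : Ω → ℝ} (hX : Measurable[𝔾] X) (hY : Measurable[𝔽] Y) (hXi : Integrable X P)
    (hYi : Integrable Y P) (hXY : Integrable (fun ω => X ω * Y ω) P) :
    |∫ ω, X ω * Y ω ∂P - (∫ ω, X ω ∂P) * ∫ ω, Y ω ∂P| ≤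
      ψ * (∫ ω, |X ω| ∂P) * ∫ ω, |Y ω| ∂P := by
  have key := abs_integral_mul_sub_le_of_ae_abs_condExp_sub_le h𝔾 hX.stronglyMeasurable hYi hXi
    (by simpa only [mul_comm] using hXY) (hmix.ae_abs_condExp_sub_integral_le h𝔽 h𝔾 hY hYi)
  simp only [mul_comm (Y _), mul_comm (∫ ω, Y ω ∂P)] at key
  linarith

end IsPsiMixing

/-- Covariance inequality under ψ-mixing (Doukhan 1994, Theorem 3): if every event
`A` in `𝔾` satisfies `|P(A | 𝔽) - P(A)| ≤ ψ P(A)` a.s., `X` is `𝔾`-measurable and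
`Y` is `𝔽`-measurable, then `|E[XY] - E X E Y| ≤ ψ E|X| E|Y|`; moreover if `X` and
`Y` are square-integrable, `|E[XY] - E X E Y| ≤ ψ √(E X²) √(E Y²)`. -/
theorem psi_mixing_covariance_inequality
    {Ω : Type*} [m0 : MeasurableSpace Ω] (P : Measure Ω) [IsProbabilityMeasure P]
    (𝔽 𝔾 : MeasurableSpace Ω) (h𝔽 : 𝔽 ≤ m0) (h𝔾 : 𝔾 ≤ m0)
    (ψ : ℝ) (hψ : 0 ≤ ψ)
    (hmix : ∀ A : Set Ω, MeasurableSet[𝔾] A →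
      ∀ᵐ ω ∂P,
        |(P[A.indicator (fun _ => (1 : ℝ))|𝔽]) ω - (P A).toReal| ≤ ψ * (P A).toReal)
    (X Y : Ω → ℝ) (hX : Measurable[𝔾] X) (hY : Measurable[𝔽] Y)
    (hXi : Integrable X P) (hYi : Integrable Y P)
    (hXY : Integrable (fun ω => X ω * Y ω) P) :
    |(∫ ω, X ω * Y ω ∂P) - (∫ ω, X ω ∂P) * ∫ ω, Y ω ∂P| ≤
        ψ * (∫ ω, |X ω| ∂P) * ∫ ω, |Y ω| ∂P ∧
      (MemLp X 2 P → MemLp Y 2 P →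
        |(∫ ω, X ω * Y ω ∂P) - (∫ ω, X ω ∂P) * ∫ ω, Y ω ∂P| ≤
          ψ * Real.sqrt (∫ ω, (X ω) ^ 2 ∂P) * Real.sqrt (∫ ω, (Y ω) ^ 2 ∂P)) := by
  have hcov := IsPsiMixing.abs_integral_mul_sub_le hmix h𝔽 h𝔾 hX hY hXi hYi hXY
  refine ⟨hcov, fun hX2 hY2 => hcov.trans ?_⟩
  gcongr
  exacts [integral_abs_le_sqrt_integral_sq hX2, integral_abs_le_sqrt_integral_sq hY2]
end

section
/- Under the stated mixing and moment conditions, for every n and every 1 ≤ j ≤ k, with F_{j−1} = σ( η_i : 1 ≤ i ≤ 2m(j−1) − m ), one has almost surely E[ |Y_j − E[Y_j | F_{j−1}]|² | F_{j−1} ] ≥ (1 − ψ(m)) c₁² m − m² ψ(m)² c₂². -/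
open MeasureTheory Filter Asymptotics Set

noncomputable section

/-- The standard normal distribution function `Φ`. -/
def stdGaussCDF (x : ℝ) : ℝ :=
  ∫ t in Set.Iic x, (Real.sqrt (2 * Real.pi))⁻¹ * Real.exp (-(t ^ 2) / 2)

/-- `m = ⌊n^α⌋`. -/
def blockLen (α : ℝ) (n : ℕ) : ℕ := ⌊(n : ℝ) ^ α⌋₊

/-- `k = ⌊n / (2m)⌋`. -/
def numBlocks (α : ℝ) (n : ℕ) : ℕ := n / (2 * blockLen α n)

/-- `Y_j = ∑_{i=1}^m η_{2m(j-1)+i}`. -/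
def blockSum {Ω : Type*} (η : ℕ → Ω → ℝ) (α : ℝ) (n j : ℕ) (ω : Ω) : ℝ :=
  ∑ i ∈ Finset.Icc 1 (blockLen α n), η (2 * blockLen α n * (j - 1) + i) ω

/-- σ-field generated by `η_i`, `1 ≤ i ≤ j`. -/
def pastSigma {Ω : Type*} (η : ℕ → Ω → ℝ) (j : ℕ) : MeasurableSpace Ω :=
  ⨆ i ∈ Set.Icc 1 j, MeasurableSpace.comap (η i) inferInstance

/-- σ-field generated by `η_i`, `i ≥ j`. -/
def futureSigma {Ω : Type*} (η : ℕ → Ω → ℝ) (j : ℕ) : MeasurableSpace Ω :=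
  ⨆ i ∈ Set.Ici j, MeasurableSpace.comap (η i) inferInstance

/-- `ψ`-mixing: for all `j, n ≥ 1` and all events `A` in the σ-field generated by
`(η_i)_{i ≥ j+n}`, `|P(A | F_j) - P(A)| ≤ ψ(n) P(A)` a.s. -/
def PsiMixingCond {Ω : Type*} [MeasurableSpace Ω] (P : Measure Ω) (η : ℕ → Ω → ℝ)
    (ψ : ℕ → ℝ) : Prop :=
  ∀ j n : ℕ, 1 ≤ j → 1 ≤ n → ∀ A : Set Ω, MeasurableSet[futureSigma η (j + n)] A →
    ∀ᵐ ω ∂P,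
      |(P[A.indicator (fun _ => (1 : ℝ))|pastSigma η j]) ω - (P A).toReal| ≤
        ψ n * (P A).toReal


open scoped ENNReal

set_option linter.unusedSectionVars false

section Aux

variable {Ω : Type*} [m0 : MeasurableSpace Ω] {η : ℕ → Ω → ℝ}

lemma pastSigma_le (hmeas : ∀ i, Measurable (η i)) (j : ℕ) : pastSigma η j ≤ m0 :=
  iSup₂_le fun i _ => measurable_iff_comap_le.mp (hmeas i)

lemma futureSigma_le (hmeas : ∀ i, Measurable (η i)) (j : ℕ) : futureSigma η j ≤ m0 :=
  iSup₂_le fun i _ => measurable_iff_comap_le.mp (hmeas i)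

omit m0 in
lemma pastSigma_zero : pastSigma η 0 = ⊥ := by
  refine le_antisymm (iSup₂_le fun i hi => ?_) bot_le
  exact absurd (hi.1.trans hi.2) (by norm_num)

omit m0 in
lemma measurable_futureSigma {a i : ℕ} (hai : a ≤ i) :
    Measurable[futureSigma η a] (η i) :=
  measurable_iff_comap_le.mpr (le_iSup₂ (f := fun i (_ : i ∈ Set.Ici a) =>
    MeasurableSpace.comap (η i) inferInstance) i hai)

variable {P : Measure Ω} [IsProbabilityMeasure P] {ψ : ℕ → ℝ}

lemma trim_prob (hm : ∀ i, Measurable (η i)) (p : ℕ) :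
    IsFiniteMeasure (P.trim (pastSigma_le hm p)) := by
  constructor
  rw [trim_measurableSet_eq (pastSigma_le hm p) MeasurableSet.univ]
  exact measure_lt_top P _

lemma measure_inter_bounds (hmeas : ∀ i, Measurable (η i)) (hψ : ∀ n, 0 ≤ ψ n)
    (hψ1 : ∀ n, ψ n ≤ 1) (hmix : PsiMixingCond P η ψ) {p m : ℕ} (hp : 1 ≤ p) (hm : 1 ≤ m)
    (B : Set Ω) (hB : MeasurableSet[pastSigma η p] B)
    (A : Set Ω) (hA : MeasurableSet[futureSigma η (p + m)] A) :
    ENNReal.ofReal (1 - ψ m) * P A * P B ≤ P (A ∩ B) ∧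
      P (A ∩ B) ≤ ENNReal.ofReal (1 + ψ m) * P A * P B := by
  have hF := pastSigma_le hmeas p
  haveI := trim_prob (P := P) hmeas p
  have hAm : MeasurableSet A := futureSigma_le hmeas (p + m) A hA
  have hBm : MeasurableSet B := hF B hB
  have hind : Integrable (A.indicator (fun _ => (1 : ℝ))) P :=
    (integrable_const (1 : ℝ)).indicator hAm
  have hae := hmix p m hp hm A hA
  set a : ℝ := (P A).toReal with ha
  have hset : ∫ x in B, (P[A.indicator (fun _ => (1 : ℝ))|pastSigma η p]) x ∂P
      = (P (A ∩ B)).toReal := by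
    rw [setIntegral_condExp hF hind hB]
    have : ∫ x in B, A.indicator (fun _ => (1 : ℝ)) x ∂P
        = ((P.restrict B) A).toReal := integral_indicator_one hAm
    rw [this, Measure.restrict_apply hAm]
  have ha0 : 0 ≤ a := ENNReal.toReal_nonneg
  have h1 : (0:ℝ) ≤ 1 + ψ m := by linarith [hψ m]
  have h2 : (0:ℝ) ≤ 1 - ψ m := by linarith [hψ1 m]
  have hub : (P (A ∩ B)).toReal ≤ (1 + ψ m) * a * (P B).toReal := by
    rw [← hset]
    calc ∫ x in B, (P[A.indicator (fun _ => (1 : ℝ))|pastSigma η p]) x ∂P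
        ≤ ∫ _ in B, ((1 + ψ m) * a) ∂P := by
          refine integral_mono_ae (integrable_condExp.restrict) (integrable_const _)
            (ae_restrict_of_ae (hae.mono fun ω h => ?_))
          have h' := abs_le.mp h
          show _ ≤ (1 + ψ m) * a
          linarith [h'.2]
      _ = (P B).toReal * ((1 + ψ m) * a) := by
          rw [setIntegral_const, smul_eq_mul, measureReal_def]
      _ = (1 + ψ m) * a * (P B).toReal := by ring
  have hlb : (1 - ψ m) * a * (P B).toReal ≤ (P (A ∩ B)).toReal := by
    rw [← hset]
    calc (1 - ψ m) * a * (P B).toReal = (P B).toReal * ((1 - ψ m) * a) := by ring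
      _ = ∫ _ in B, ((1 - ψ m) * a) ∂P := by rw [setIntegral_const, smul_eq_mul, measureReal_def]
      _ ≤ ∫ x in B, (P[A.indicator (fun _ => (1 : ℝ))|pastSigma η p]) x ∂P := by
          refine integral_mono_ae (integrable_const _) (integrable_condExp.restrict)
            (ae_restrict_of_ae (hae.mono fun ω h => ?_))
          have h' := abs_le.mp h
          show (1 - ψ m) * a ≤ _
          linarith [h'.1]
  constructor
  · have : ENNReal.ofReal ((1 - ψ m) * a * (P B).toReal) ≤ P (A ∩ B) := by
      rw [← ENNReal.ofReal_toReal (measure_ne_top P (A ∩ B))]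
      exact ENNReal.ofReal_le_ofReal hlb
    refine le_trans (le_of_eq ?_) this
    rw [ENNReal.ofReal_mul (mul_nonneg h2 ha0), ENNReal.ofReal_mul h2,
      ha, ENNReal.ofReal_toReal (measure_ne_top P A),
      ENNReal.ofReal_toReal (measure_ne_top P B)]
  · have : P (A ∩ B) ≤ ENNReal.ofReal ((1 + ψ m) * a * (P B).toReal) := by
      rw [← ENNReal.ofReal_toReal (measure_ne_top P (A ∩ B))]
      exact ENNReal.ofReal_le_ofReal hub
    refine this.trans (le_of_eq ?_)
    rw [ENNReal.ofReal_mul (mul_nonneg h1 ha0), ENNReal.ofReal_mul h1,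
      ha, ENNReal.ofReal_toReal (measure_ne_top P A),
      ENNReal.ofReal_toReal (measure_ne_top P B)]

lemma setIntegral_mix_bounds (hmeas : ∀ i, Measurable (η i)) (hψ : ∀ n, 0 ≤ ψ n)
    (hψ1 : ∀ n, ψ n ≤ 1) (hmix : PsiMixingCond P η ψ) {p m : ℕ} (hp : 1 ≤ p) (hm : 1 ≤ m)
    (B : Set Ω) (hB : MeasurableSet[pastSigma η p] B)
    (f : Ω → ℝ) (hfm : Measurable[futureSigma η (p + m)] f)
    (hf0 : ∀ ω, 0 ≤ f ω) (hfi : Integrable f P) :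
    (1 - ψ m) * (∫ x, f x ∂P) * (P B).toReal ≤ ∫ x in B, f x ∂P ∧
      ∫ x in B, f x ∂P ≤ (1 + ψ m) * (∫ x, f x ∂P) * (P B).toReal := by
  have hFt := futureSigma_le hmeas (p + m)
  have hBm : MeasurableSet B := pastSigma_le hmeas p B hB
  set g : Ω → ℝ≥0∞ := fun ω => ENNReal.ofReal (f ω) with hg
  have hgm : Measurable[futureSigma η (p + m)] g := hfm.ennreal_ofReal
  have claim_ub : (P.restrict B).trim hFt ≤ (ENNReal.ofReal (1 + ψ m) * P B) • (P.trim hFt) := by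
    refine Measure.le_intro fun A hA _ => ?_
    rw [trim_measurableSet_eq hFt hA, Measure.smul_apply, trim_measurableSet_eq hFt hA,
      Measure.restrict_apply (hFt A hA), smul_eq_mul]
    calc P (A ∩ B) ≤ ENNReal.ofReal (1 + ψ m) * P A * P B :=
          (measure_inter_bounds hmeas hψ hψ1 hmix hp hm B hB A hA).2
      _ = ENNReal.ofReal (1 + ψ m) * P B * P A := by ring
  have claim_lb : (ENNReal.ofReal (1 - ψ m) * P B) • (P.trim hFt) ≤ (P.restrict B).trim hFt := by
    refine Measure.le_intro fun A hA _ => ?_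
    rw [trim_measurableSet_eq hFt hA, Measure.smul_apply, trim_measurableSet_eq hFt hA,
      Measure.restrict_apply (hFt A hA), smul_eq_mul]
    calc ENNReal.ofReal (1 - ψ m) * P B * P A
        = ENNReal.ofReal (1 - ψ m) * P A * P B := by ring
      _ ≤ P (A ∩ B) := (measure_inter_bounds hmeas hψ hψ1 hmix hp hm B hB A hA).1
  have h1 : ∫⁻ x in B, g x ∂P = ∫⁻ x, g x ∂((P.restrict B).trim hFt) :=
    (lintegral_trim hFt hgm).symm
  have h2 : ∫⁻ x, g x ∂(P.trim hFt) = ∫⁻ x, g x ∂P := lintegral_trim hFt hgm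
  have lub : ∫⁻ x in B, g x ∂P ≤ (ENNReal.ofReal (1 + ψ m) * P B) * ∫⁻ x, g x ∂P := by
    rw [h1, ← h2, ← smul_eq_mul (ENNReal.ofReal (1 + ψ m) * P B), ← lintegral_smul_measure]
    exact lintegral_mono' claim_ub le_rfl
  have llb : (ENNReal.ofReal (1 - ψ m) * P B) * ∫⁻ x, g x ∂P ≤ ∫⁻ x in B, g x ∂P := by
    rw [h1, ← h2, ← smul_eq_mul (ENNReal.ofReal (1 - ψ m) * P B), ← lintegral_smul_measure]
    exact lintegral_mono' claim_lb le_rfl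
  have hI0 : 0 ≤ ∫ x, f x ∂P := integral_nonneg hf0
  have hIB0 : 0 ≤ ∫ x in B, f x ∂P := integral_nonneg hf0
  have e1 : ∫⁻ x, g x ∂P = ENNReal.ofReal (∫ x, f x ∂P) :=
    (ofReal_integral_eq_lintegral_ofReal hfi (ae_of_all _ hf0)).symm
  have e2 : ∫⁻ x in B, g x ∂P = ENNReal.ofReal (∫ x in B, f x ∂P) :=
    (ofReal_integral_eq_lintegral_ofReal hfi.restrict (ae_of_all _ hf0)).symm
  have h1' : (0:ℝ) ≤ 1 + ψ m := by linarith [hψ m]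
  have h2' : (0:ℝ) ≤ 1 - ψ m := by linarith [hψ1 m]
  have hPB : P B = ENNReal.ofReal (P B).toReal := (ENNReal.ofReal_toReal (measure_ne_top P B)).symm
  constructor
  · have : ENNReal.ofReal ((1 - ψ m) * (∫ x, f x ∂P) * (P B).toReal)
        ≤ ENNReal.ofReal (∫ x in B, f x ∂P) := by
      rw [← e2]
      refine le_trans (le_of_eq ?_) llb
      rw [e1, hPB, ENNReal.ofReal_mul (mul_nonneg h2' hI0), ENNReal.ofReal_mul h2',
        ENNReal.toReal_ofReal ENNReal.toReal_nonneg]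
      ring
    exact (ENNReal.ofReal_le_ofReal_iff hIB0).mp this
  · have : ENNReal.ofReal (∫ x in B, f x ∂P)
        ≤ ENNReal.ofReal ((1 + ψ m) * (∫ x, f x ∂P) * (P B).toReal) := by
      rw [← e2]
      refine lub.trans (le_of_eq ?_)
      rw [e1, hPB, ENNReal.ofReal_mul (mul_nonneg h1' hI0), ENNReal.ofReal_mul h1',
        ENNReal.toReal_ofReal ENNReal.toReal_nonneg]
      ring
    exact (ENNReal.ofReal_le_ofReal_iff (by positivity)).mp this

lemma my_setIntegral_const {X : Type*} {mX : MeasurableSpace X} (μ : Measure X) (s : Set X)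
    (c : ℝ) : ∫ _ in s, c ∂μ = (μ s).toReal * c := by
  letI := mX
  rw [setIntegral_const, smul_eq_mul, measureReal_def]

lemma condexp_mix_bounds (hmeas : ∀ i, Measurable (η i)) (hψ : ∀ n, 0 ≤ ψ n)
    (hψ1 : ∀ n, ψ n ≤ 1) (hmix : PsiMixingCond P η ψ) {p m : ℕ} (hp : 1 ≤ p) (hm : 1 ≤ m)
    (f : Ω → ℝ) (hfm : Measurable[futureSigma η (p + m)] f)
    (hf0 : ∀ ω, 0 ≤ f ω) (hfi : Integrable f P) :
    (∀ᵐ ω ∂P, (1 - ψ m) * (∫ x, f x ∂P) ≤ (P[f|pastSigma η p]) ω) ∧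
      (∀ᵐ ω ∂P, (P[f|pastSigma η p]) ω ≤ (1 + ψ m) * (∫ x, f x ∂P)) := by
  have hF := pastSigma_le hmeas p
  haveI := trim_prob (P := P) hmeas p
  have hcm : StronglyMeasurable[pastSigma η p] (P[f|pastSigma η p]) := stronglyMeasurable_condExp
  have hct : Integrable (P[f|pastSigma η p]) (P.trim hF) :=
    Integrable.trim hF integrable_condExp hcm
  constructor
  · have h : (fun _ : Ω => (1 - ψ m) * (∫ x, f x ∂P)) ≤ᵐ[P.trim hF] P[f|pastSigma η p] := by
      refine @ae_le_of_forall_setIntegral_le Ω (pastSigma η p) (P.trim hF) _ _ (integrable_const _) hct fun s hs _ => ?_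
      rw [my_setIntegral_const, ← setIntegral_trim hF hcm hs,
        setIntegral_condExp hF hfi hs, trim_measurableSet_eq hF hs]
      have := (setIntegral_mix_bounds hmeas hψ hψ1 hmix hp hm s hs f hfm hf0 hfi).1
      linarith
    exact ae_le_of_ae_le_trim h
  · have h : P[f|pastSigma η p] ≤ᵐ[P.trim hF] (fun _ : Ω => (1 + ψ m) * (∫ x, f x ∂P)) := by
      refine @ae_le_of_forall_setIntegral_le Ω (pastSigma η p) (P.trim hF) _ _ hct (integrable_const _) fun s hs _ => ?_
      rw [my_setIntegral_const, ← setIntegral_trim hF hcm hs,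
        setIntegral_condExp hF hfi hs, trim_measurableSet_eq hF hs]
      have := (setIntegral_mix_bounds hmeas hψ hψ1 hmix hp hm s hs f hfm hf0 hfi).2
      linarith
    exact ae_le_of_ae_le_trim h

lemma condexp_abs_le_mix (hmeas : ∀ i, Measurable (η i)) (hψ : ∀ n, 0 ≤ ψ n)
    (hψ1 : ∀ n, ψ n ≤ 1) (hmix : PsiMixingCond P η ψ) {p m : ℕ} (hp : 1 ≤ p) (hm : 1 ≤ m)
    (f : Ω → ℝ) (hfm : Measurable[futureSigma η (p + m)] f)
    (hfi : Integrable f P) (hmean : ∫ x, f x ∂P = 0) :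
    ∀ᵐ ω ∂P, |(P[f|pastSigma η p]) ω| ≤ ψ m * ∫ x, |f x| ∂P := by
  set fp : Ω → ℝ := fun ω => max (f ω) 0 with hfp
  set fm : Ω → ℝ := fun ω => max (-f ω) 0 with hfm'
  have hfpm : Measurable[futureSigma η (p + m)] fp := hfm.max measurable_const
  have hfmm : Measurable[futureSigma η (p + m)] fm := hfm.neg.max measurable_const
  have hfpi : Integrable fp P := hfi.pos_part
  have hfmi : Integrable fm P := hfi.neg.pos_part
  have hfp0 : ∀ ω, 0 ≤ fp ω := fun ω => le_max_right _ _
  have hfm0 : ∀ ω, 0 ≤ fm ω := fun ω => le_max_right _ _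
  have hsplit : f = fun ω => fp ω - fm ω := by
    funext ω; simp only [hfp, hfm']; rw [max_zero_sub_max_neg_zero_eq_self]
  have hEp0 : 0 ≤ ∫ x, fp x ∂P := integral_nonneg hfp0
  have hEm0 : 0 ≤ ∫ x, fm x ∂P := integral_nonneg hfm0
  have hEsub : (∫ x, fp x ∂P) - ∫ x, fm x ∂P = 0 := by
    rw [← integral_sub hfpi hfmi, ← hmean]; congr 1; exact hsplit.symm
  have hEabs : (∫ x, fp x ∂P) + ∫ x, fm x ∂P = ∫ x, |f x| ∂P := by
    rw [← integral_add hfpi hfmi]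
    congr 1; funext ω
    exact max_zero_add_max_neg_zero_eq_abs_self (f ω)
  have hcond : P[f|pastSigma η p] =ᵐ[P] P[fp|pastSigma η p] - P[fm|pastSigma η p] := by
    calc P[f|pastSigma η p] = P[fp - fm|pastSigma η p] := by rw [hsplit]; rfl
      _ =ᵐ[P] P[fp|pastSigma η p] - P[fm|pastSigma η p] := condExp_sub hfpi hfmi _
  have bp := condexp_mix_bounds hmeas hψ hψ1 hmix hp hm fp hfpm hfp0 hfpi
  have bm := condexp_mix_bounds hmeas hψ hψ1 hmix hp hm fm hfmm hfm0 hfmi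
  filter_upwards [hcond, bp.1, bp.2, bm.1, bm.2] with ω h0 h1 h2 h3 h4
  rw [h0]
  simp only [Pi.sub_apply]
  rw [abs_le]
  constructor
  · have : -(ψ m * ((∫ x, fp x ∂P) + ∫ x, fm x ∂P)) ≤
        (P[fp|pastSigma η p]) ω - (P[fm|pastSigma η p]) ω := by nlinarith
    rw [hEabs] at this; linarith
  · have : (P[fp|pastSigma η p]) ω - (P[fm|pastSigma η p]) ω ≤
        ψ m * ((∫ x, fp x ∂P) + ∫ x, fm x ∂P) := by nlinarith
    rw [hEabs] at this; linarith

lemma integral_abs_le_of_moment {ρ : ℝ} (hρ : 0 < ρ) {f : Ω → ℝ}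
    (hf : MemLp f (ENNReal.ofReal (2 + ρ)) P) {C : ℝ} (hC : 0 ≤ C)
    (hmom : ∫ x, |f x| ^ (2 + ρ) ∂P ≤ C ^ (2 + ρ)) : ∫ x, |f x| ∂P ≤ C := by
  have h2ρ : (0:ℝ) < 2 + ρ := by linarith
  have hq0 : ENNReal.ofReal (2 + ρ) ≠ 0 := by
    simp [ENNReal.ofReal_eq_zero]; linarith
  have hq1 : (1 : ℝ≥0∞) ≤ ENNReal.ofReal (2 + ρ) := by
    rw [← ENNReal.ofReal_one]
    exact ENNReal.ofReal_le_ofReal (by linarith)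
  have hqt : (ENNReal.ofReal (2 + ρ)).toReal = 2 + ρ := ENNReal.toReal_ofReal h2ρ.le
  have hfi : Integrable f P := hf.integrable hq1
  have e1 : eLpNorm f 1 P = ENNReal.ofReal (∫ x, ‖f x‖ ∂P) := by
    rw [eLpNorm_one_eq_lintegral_enorm, ← ofReal_integral_norm_eq_lintegral_enorm hfi]
  have e2 : eLpNorm f (ENNReal.ofReal (2 + ρ)) P
      = ENNReal.ofReal ((∫ x, ‖f x‖ ^ (2 + ρ) ∂P) ^ (2 + ρ)⁻¹) := by
    rw [hf.eLpNorm_eq_integral_rpow_norm hq0 ENNReal.ofReal_ne_top, hqt]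
  have hmono := eLpNorm_le_eLpNorm_of_exponent_le hq1 hf.1
  rw [e1, e2] at hmono
  have hint0 : 0 ≤ ∫ x, ‖f x‖ ^ (2 + ρ) ∂P :=
    integral_nonneg fun x => Real.rpow_nonneg (norm_nonneg _) _
  have hr : (∫ x, ‖f x‖ ∂P) ≤ (∫ x, ‖f x‖ ^ (2 + ρ) ∂P) ^ (2 + ρ)⁻¹ :=
    (ENNReal.ofReal_le_ofReal_iff (Real.rpow_nonneg hint0 _)).mp hmono
  have habs : ∫ x, ‖f x‖ ∂P = ∫ x, |f x| ∂P := by simp [Real.norm_eq_abs]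
  have habs2 : ∫ x, ‖f x‖ ^ (2 + ρ) ∂P = ∫ x, |f x| ^ (2 + ρ) ∂P := by
    simp [Real.norm_eq_abs]
  rw [habs, habs2] at hr
  refine hr.trans ?_
  calc (∫ x, |f x| ^ (2 + ρ) ∂P) ^ (2 + ρ)⁻¹ ≤ (C ^ (2 + ρ)) ^ (2 + ρ)⁻¹ := by
        refine Real.rpow_le_rpow ?_ hmom (by positivity)
        exact integral_nonneg fun x => Real.rpow_nonneg (abs_nonneg _) _
    _ = C := by
        rw [← Real.rpow_mul hC, mul_inv_cancel₀ h2ρ.ne', Real.rpow_one]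

end Aux

/-- Inequality (4.3): a.s.,
`E[|Y_j - E[Y_j | F_{j-1}]|² | F_{j-1}] ≥ (1 - ψ(m)) c₁² m - m² ψ(m)² c₂²`,
where `F_{j-1} = σ(η_i : 1 ≤ i ≤ 2m(j-1) - m)`. -/
theorem condexp_centered_blockSum_variance_ge
    {Ω : Type*} [MeasurableSpace Ω] (P : Measure Ω) [IsProbabilityMeasure P]
    (η : ℕ → Ω → ℝ) (ψ : ℕ → ℝ) (α ρ c₁ c₂ : ℝ)
    (hα : α ∈ Set.Ioo (0 : ℝ) 1) (hρ : ρ ∈ Set.Ioc (0 : ℝ) 1)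
    (hc₁ : 0 < c₁) (hc₂ : 0 < c₂)
    (hmeas : ∀ i, Measurable (η i))
    (hLp : ∀ i, MemLp (η i) (ENNReal.ofReal (2 + ρ)) P)
    (hmean : ∀ i, ∫ ω, η i ω ∂P = 0)
    (hψ : ∀ n, 0 ≤ ψ n) (hψ1 : ∀ n, ψ n ≤ 1)
    (hmix : PsiMixingCond P η ψ)
    (hvar : ∀ K m : ℕ, 1 ≤ m →
      c₁ ^ 2 * (m : ℝ) ≤ ∫ ω, (∑ i ∈ Finset.Icc (K + 1) (K + m), η i ω) ^ 2 ∂P)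
    (hmom : ∀ K m : ℕ, 1 ≤ m →
      ∫ ω, |∑ i ∈ Finset.Icc (K + 1) (K + m), η i ω| ^ (2 + ρ) ∂P ≤
        (m : ℝ) ^ (1 + ρ / 2) * c₂ ^ (2 + ρ)) :
    ∀ n : ℕ, ∀ j ∈ Finset.Icc 1 (numBlocks α n),
      ∀ᵐ ω ∂P,
        (1 - ψ (blockLen α n)) * c₁ ^ 2 * (blockLen α n : ℝ) -
            (blockLen α n : ℝ) ^ 2 * ψ (blockLen α n) ^ 2 * c₂ ^ 2 ≤
          (P[fun ω' =>
              |blockSum η α n j ω' -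
                (P[blockSum η α n j|
                  pastSigma η (2 * blockLen α n * (j - 1) - blockLen α n)]) ω'| ^ 2|
            pastSigma η (2 * blockLen α n * (j - 1) - blockLen α n)]) ω := by
  intro n j hj
  obtain ⟨hj1, hjk⟩ := Finset.mem_Icc.mp hj
  set m : ℕ := blockLen α n with hm_def
  have hm1 : 1 ≤ m := by
    rcases Nat.eq_zero_or_pos m with h | h
    · exfalso
      have : numBlocks α n = 0 := by
        rw [numBlocks, ← hm_def, h]
        simp
      omega
    · exact h
  set K : ℕ := 2 * m * (j - 1) with hK_def
  set p : ℕ := K - m with hp_def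
  set Y : Ω → ℝ := blockSum η α n j with hY_def
  have hρ0 : 0 < ρ := hρ.1
  have hYfun : Y = fun ω => ∑ i ∈ Finset.Icc 1 m, η (K + i) ω := rfl
  -- reindexing
  have hYeq : ∀ ω, Y ω = ∑ i ∈ Finset.Icc (K + 1) (K + m), η i ω := by
    intro ω
    rw [hYfun,
      show Finset.Icc (K + 1) (K + m) = Finset.map (addLeftEmbedding K) (Finset.Icc 1 m) from
        (Finset.map_add_left_Icc _ _ _).symm,
      Finset.sum_map]
    rfl
  -- basic integrability facts
  have h2le : (2 : ℝ≥0∞) ≤ ENNReal.ofReal (2 + ρ) := by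
    rw [show (2 : ℝ≥0∞) = ENNReal.ofReal 2 by norm_num]
    exact ENNReal.ofReal_le_ofReal (by linarith)
  have hYLp : MemLp Y (ENNReal.ofReal (2 + ρ)) P := by
    rw [hYfun]
    exact memLp_finset_sum _ fun i _ => hLp _
  have hY2 : MemLp Y 2 P := hYLp.mono_exponent h2le
  have hYi : Integrable Y P := hY2.integrable one_le_two
  have hYm : Measurable Y := by
    rw [hYfun]
    exact Finset.measurable_sum _ fun i _ => hmeas _
  have hYsq_int : Integrable (fun ω => Y ω ^ 2) P := hY2.integrable_sq
  have hYmean : ∫ ω, Y ω ∂P = 0 := by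
    rw [hYfun]
    rw [integral_finset_sum _ fun i _ =>
      (hLp _).integrable (le_trans (by norm_num) h2le)]
    simp [hmean]
  have hvar' : c₁ ^ 2 * (m : ℝ) ≤ ∫ ω, Y ω ^ 2 ∂P := by
    refine le_trans (hvar K m hm1) (le_of_eq ?_)
    congr 1
    funext ω
    rw [hYeq ω]
  have hmom' : ∫ ω, |Y ω| ^ (2 + ρ) ∂P ≤ (m : ℝ) ^ (1 + ρ / 2) * c₂ ^ (2 + ρ) := by
    refine le_trans (le_of_eq ?_) (hmom K m hm1)
    congr 1
    funext ω
    rw [hYeq ω]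
  -- E|Y| bound
  have hDle : ∫ ω, |Y ω| ∂P ≤ (m : ℝ) ^ ((1 : ℝ) / 2) * c₂ := by
    refine integral_abs_le_of_moment hρ0 hYLp (by positivity) ?_
    refine hmom'.trans (le_of_eq ?_)
    rw [Real.mul_rpow (by positivity) hc₂.le, ← Real.rpow_mul (Nat.cast_nonneg m),
      show (1:ℝ)/2*(2+ρ) = 1 + ρ/2 from by ring]
  have hD0 : 0 ≤ ∫ ω, |Y ω| ∂P := integral_nonneg fun ω => abs_nonneg _
  have hDsq : (∫ ω, |Y ω| ∂P) ^ 2 ≤ (m : ℝ) * c₂ ^ 2 := by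
    have h1 : ((m : ℝ) ^ ((1 : ℝ) / 2)) ^ 2 = (m : ℝ) := by
      rw [← Real.rpow_natCast ((m : ℝ) ^ ((1 : ℝ) / 2)) 2, ← Real.rpow_mul (Nat.cast_nonneg m)]
      norm_num
    nlinarith [hDle, hD0, Real.rpow_nonneg (Nat.cast_nonneg m) ((1:ℝ)/2)]
  have hm1R : (1 : ℝ) ≤ (m : ℝ) := by exact_mod_cast hm1
  by_cases hj2 : j = 1
  · -- trivial case : p = 0
    subst hj2
    have hp0 : p = 0 := by simp [hp_def, hK_def]
    rw [hp0, pastSigma_zero, condExp_bot, condExp_bot]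
    refine ae_of_all _ fun ω => ?_
    rw [hYmean]
    have : ∀ ω', |Y ω' - 0| ^ 2 = Y ω' ^ 2 := fun ω' => by rw [sub_zero, sq_abs]
    rw [show (fun ω' => |Y ω' - 0| ^ 2) = fun ω' => Y ω' ^ 2 from funext this]
    have h0m : (0:ℝ) ≤ (m:ℝ) := by linarith
    have hkey0 : (0:ℝ) ≤ ψ m * c₁ ^ 2 * (m:ℝ) :=
      mul_nonneg (mul_nonneg (hψ m) (sq_nonneg c₁)) h0m
    have key : (1 - ψ m) * c₁ ^ 2 * (m:ℝ) ≤ c₁ ^ 2 * (m:ℝ) := by nlinarith [hkey0]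
    nlinarith [hvar', key, sq_nonneg ((m:ℝ) * ψ m * c₂)]
  · -- main case : j ≥ 2
    have hj2' : 2 ≤ j := by omega
    have hKm : 2 * m ≤ K := by
      rw [hK_def]
      calc 2 * m = 2 * m * 1 := (mul_one _).symm
        _ ≤ 2 * m * (j - 1) := Nat.mul_le_mul_left _ (by omega)
    have hp1 : 1 ≤ p := by omega
    have hpm : p + m = K := by omega
    have hYfut : Measurable[futureSigma η (p + m)] Y := by
      rw [hYfun]
      exact Finset.measurable_sum _ fun i hi => measurable_futureSigma (by omega)
    set g : Ω → ℝ := P[Y|pastSigma η p] with hg_def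
    have hF := pastSigma_le hmeas p
    have hgSM : StronglyMeasurable[pastSigma η p] g := stronglyMeasurable_condExp
    have hgAE : AEStronglyMeasurable g P := (hgSM.mono hF).aestronglyMeasurable
    have habsg : ∀ᵐ ω ∂P, |g ω| ≤ ψ m * ∫ x, |Y x| ∂P :=
      condexp_abs_le_mix hmeas hψ hψ1 hmix hp1 hm1 Y hYfut hYi hYmean
    have hsqb : ∀ᵐ ω ∂P, (1 - ψ m) * (∫ x, Y x ^ 2 ∂P) ≤ (P[fun ω => Y ω ^ 2|pastSigma η p]) ω :=
      (condexp_mix_bounds hmeas hψ hψ1 hmix hp1 hm1 (fun ω => Y ω ^ 2)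
        (hYfut.pow_const 2) (fun ω => sq_nonneg _) hYsq_int).1
    set cg : ℝ := ψ m * ∫ x, |Y x| ∂P with hcg_def
    have hgbd : ∀ᵐ ω ∂P, ‖g ω‖ ≤ cg := by
      filter_upwards [habsg] with ω h
      rwa [Real.norm_eq_abs]
    have h2gbd : ∀ᵐ ω ∂P, ‖2 * g ω‖ ≤ 2 * cg := by
      filter_upwards [hgbd] with ω h
      rw [norm_mul]
      calc ‖(2:ℝ)‖ * ‖g ω‖ = 2 * ‖g ω‖ := by norm_num
        _ ≤ 2 * cg := by linarith
    have hgY_int : Integrable (fun ω => (2 * g ω) * Y ω) P :=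
      hYi.bdd_mul (hgAE.const_mul 2) h2gbd
    have hg2_int : Integrable (fun ω => g ω * g ω) P :=
      integrable_condExp.bdd_mul hgAE hgbd
    have hpoint : (fun ω => |Y ω - g ω| ^ 2)
        = (fun ω => Y ω ^ 2 + g ω * g ω) - (fun ω => (2 * g ω) * Y ω) := by
      funext ω
      simp only [Pi.sub_apply]
      rw [sq_abs]
      ring
    have hc1 : P[fun ω => |Y ω - g ω| ^ 2|pastSigma η p]
        =ᵐ[P] P[fun ω => Y ω ^ 2 + g ω * g ω|pastSigma η p]
          - P[fun ω => (2 * g ω) * Y ω|pastSigma η p] := by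
      rw [hpoint]
      exact condExp_sub (hYsq_int.add hg2_int) hgY_int _
    have hc2 : P[fun ω => Y ω ^ 2 + g ω * g ω|pastSigma η p]
        =ᵐ[P] P[fun ω => Y ω ^ 2|pastSigma η p] + P[fun ω => g ω * g ω|pastSigma η p] := by
      rw [show (fun ω => Y ω ^ 2 + g ω * g ω)
        = (fun ω => Y ω ^ 2) + (fun ω => g ω * g ω) from rfl]
      exact condExp_add hYsq_int hg2_int _
    have hc3 : P[fun ω => g ω * g ω|pastSigma η p] = fun ω => g ω * g ω :=
      condExp_of_stronglyMeasurable hF (hgSM.mul hgSM) hg2_int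
    have hc4 : P[fun ω => (2 * g ω) * Y ω|pastSigma η p] =ᵐ[P] fun ω => (2 * g ω) * g ω := by
      have := condExp_stronglyMeasurable_mul_of_bound hF
        (f := fun ω => 2 * g ω) (g := Y) (stronglyMeasurable_const.mul hgSM) hYi (2 * cg) h2gbd
      calc P[fun ω => (2 * g ω) * Y ω|pastSigma η p]
          =ᵐ[P] (fun ω => 2 * g ω) * P[Y|pastSigma η p] := this
        _ = fun ω => (2 * g ω) * g ω := rfl
    filter_upwards [hc1, hc2, hc4, hsqb, habsg] with ω e1 e2 e4 e5 e6
    have hgoal : (P[fun ω' => |Y ω' - g ω'| ^ 2|pastSigma η p]) ω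
        = (P[fun ω' => Y ω' ^ 2|pastSigma η p]) ω - g ω * g ω := by
      rw [e1]
      simp only [Pi.sub_apply, Pi.add_apply]
      rw [e2, e4, hc3]
      simp only [Pi.add_apply]
      ring
    rw [hgoal]
    have hq1 : (1 - ψ m) * (c₁ ^ 2 * (m : ℝ)) ≤ (1 - ψ m) * ∫ x, Y x ^ 2 ∂P := by
      refine mul_le_mul_of_nonneg_left hvar' ?_
      linarith [hψ1 m]
    have hg2 : g ω * g ω ≤ ψ m ^ 2 * ((m : ℝ) * c₂ ^ 2) := by
      have h1 : g ω * g ω ≤ cg ^ 2 := by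
        have h' : |g ω| * |g ω| ≤ cg * cg :=
          mul_le_mul e6 e6 (abs_nonneg _) ((abs_nonneg _).trans e6)
        rw [abs_mul_abs_self] at h'
        rw [pow_two]
        exact h'
      have h2 : cg ^ 2 ≤ ψ m ^ 2 * ((m : ℝ) * c₂ ^ 2) := by
        rw [hcg_def, mul_pow]
        exact mul_le_mul_of_nonneg_left hDsq (sq_nonneg _)
      linarith
    have hmm : (m : ℝ) ≤ (m : ℝ) ^ 2 := by nlinarith [hm1R]
    have hfin : ψ m ^ 2 * ((m : ℝ) * c₂ ^ 2) ≤ (m : ℝ) ^ 2 * ψ m ^ 2 * c₂ ^ 2 := by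
      have h := mul_le_mul_of_nonneg_left hmm (mul_nonneg (sq_nonneg (ψ m)) (sq_nonneg c₂))
      linarith [h]
    linarith [e5, hq1, hg2, hfin]


end
end

section
/- There exists an absolute constant C > 0 such that for all x ≥ 0 and all real ε with |ε| ≤ 1: (1 − Φ(x)) exp( −C (1 + x) |ε| ) ≤ 1 − Φ(x + ε) ≤ (1 − Φ(x)) exp( C (1 + x) |ε| ); equivalently, | ln( (1 − Φ(x + ε)) / (1 − Φ(x)) ) | ≤ C (1 + x) |ε|. -/
/-! Write `Q = 1 - Φ` and `φ = Φ'`. Since `(log Q)' = -φ / Q`, the mean value theorem reduces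
the claim to bounding the hazard rate `φ / Q` by `C (1 + x)` on `[x - 1, x + 1]`. If `|t| ≤ a`
with `a ≥ 1`, then `φ ≥ e^{-3/2} φ(t)` on the window `[t, t + 1/a]`, so `Q(t) ≥ e^{-3/2} φ(t) / a`;
this gives the theorem with `C = e^{3/2}`. -/

noncomputable section

open MeasureTheory ProbabilityTheory Real Set

theorem hasDerivAt_integral_Ioi {f : ℝ → ℝ} (hf : Continuous f) (hfi : Integrable f) (x : ℝ) :
    HasDerivAt (fun y ↦ ∫ t in Ioi y, f t) (-f x) x := by
  have hsplit : (fun y ↦ ∫ t in Ioi y, f t) =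
      fun y ↦ (∫ t in Ioi 0, f t) - ∫ t in (0 : ℝ)..y, f t := funext fun y ↦
    eq_sub_of_add_eq' (intervalIntegral.integral_interval_add_Ioi hfi.integrableOn hfi.integrableOn)
  rw [hsplit]
  exact (intervalIntegral.integral_hasDerivAt_right hfi.intervalIntegrable
    (hf.stronglyMeasurableAtFilter _ _) hf.continuousAt).const_sub _

def gaussianTail (x : ℝ) : ℝ := ∫ t in Ioi x, gaussianPDFReal 0 1 t

theorem one_sub_stdGaussCDF (x : ℝ) : 1 - stdGaussCDF x = gaussianTail x := by
  have hpdf : gaussianPDFReal 0 1 = fun t ↦ (√(2 * π))⁻¹ * rexp (-(t ^ 2) / 2) := by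
    ext t; simp [gaussianPDFReal]
  have hint := integrable_gaussianPDFReal 0 1
  have htotal := intervalIntegral.integral_Iic_add_Ioi (b := x) hint.integrableOn hint.integrableOn
  rw [integral_gaussianPDFReal_eq_one 0 one_ne_zero] at htotal
  rw [gaussianTail, stdGaussCDF, ← htotal, hpdf]
  ring

theorem gaussianTail_pos (x : ℝ) : 0 < gaussianTail x := by
  rw [gaussianTail, setIntegral_pos_iff_support_of_nonneg_ae
    (ae_of_all _ (gaussianPDFReal_nonneg 0 1)) (integrable_gaussianPDFReal 0 1).integrableOn]
  simp [Function.support, (gaussianPDFReal_pos 0 1 _ one_ne_zero).ne']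

theorem hasDerivAt_gaussianTail (x : ℝ) :
    HasDerivAt gaussianTail (-gaussianPDFReal 0 1 x) x :=
  hasDerivAt_integral_Ioi (by unfold gaussianPDFReal; fun_prop) (integrable_gaussianPDFReal 0 1) x

theorem gaussianPDFReal_mul_exp_le {t s δ : ℝ} (hδ : 0 ≤ δ) (hts : t ≤ s) (hst : s ≤ t + δ) :
    gaussianPDFReal 0 1 t * rexp (-(δ * |t| + δ ^ 2 / 2)) ≤ gaussianPDFReal 0 1 s := by
  have habs : |s| ≤ |t| + δ :=
    abs_le.2 ⟨by linarith [neg_abs_le t], by linarith [le_abs_self t]⟩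
  have hsq : s ^ 2 ≤ (|t| + δ) ^ 2 := by
    rw [← sq_abs s]; exact pow_le_pow_left₀ (abs_nonneg s) habs 2
  simp only [gaussianPDFReal, NNReal.coe_one, mul_one, sub_zero, mul_assoc, ← exp_add]
  gcongr
  nlinarith [sq_abs t]

theorem mul_gaussianPDFReal_mul_exp_le_gaussianTail {δ : ℝ} (hδ : 0 ≤ δ) (t : ℝ) :
    δ * (gaussianPDFReal 0 1 t * rexp (-(δ * |t| + δ ^ 2 / 2))) ≤ gaussianTail t := by
  have hint := (integrable_gaussianPDFReal 0 1).integrableOn (s := Ioc t (t + δ))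
  have hwindow := setIntegral_ge_of_const_le_real measurableSet_Ioc
    (by simp [Real.volume_Ioc]) (fun s hs ↦ gaussianPDFReal_mul_exp_le hδ hs.1.le hs.2) hint
  rw [Real.volume_real_Ioc, add_sub_cancel_left, max_eq_left hδ, mul_comm] at hwindow
  exact hwindow.trans (setIntegral_mono_set (integrable_gaussianPDFReal 0 1).integrableOn
    (ae_of_all _ (gaussianPDFReal_nonneg 0 1)) Ioc_subset_Ioi_self.eventuallyLE)

theorem gaussianPDFReal_le_mul_gaussianTail {a t : ℝ} (ha : 1 ≤ a) (hta : |t| ≤ a) :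
    gaussianPDFReal 0 1 t ≤ rexp (3 / 2) * a * gaussianTail t := by
  have ha0 : 0 < a := by linarith
  have hinv_mul : a⁻¹ * |t| ≤ 1 := by rw [inv_mul_le_iff₀ ha0]; linarith
  have hinv_sq : a⁻¹ ^ 2 ≤ 1 := pow_le_one₀ (by positivity) (inv_le_one_of_one_le₀ ha)
  have hexp : rexp (-(3 / 2)) ≤ rexp (-(a⁻¹ * |t| + a⁻¹ ^ 2 / 2)) := by gcongr; linarith
  have hwindow := mul_gaussianPDFReal_mul_exp_le_gaussianTail (inv_nonneg.2 ha0.le) t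
  calc gaussianPDFReal 0 1 t
      = rexp (3 / 2) * a * (a⁻¹ * (gaussianPDFReal 0 1 t * rexp (-(3 / 2)))) := by
        rw [exp_neg]; field_simp
    _ ≤ rexp (3 / 2) * a *
          (a⁻¹ * (gaussianPDFReal 0 1 t * rexp (-(a⁻¹ * |t| + a⁻¹ ^ 2 / 2)))) := by
        gcongr; exact gaussianPDFReal_nonneg 0 1 t
    _ ≤ rexp (3 / 2) * a * gaussianTail t := by gcongr

theorem abs_log_gaussianTail_div_le {x ε : ℝ} (hx : 0 ≤ x) (hε : |ε| ≤ 1) :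
    |log (gaussianTail (x + ε) / gaussianTail x)| ≤ rexp (3 / 2) * (1 + x) * |ε| := by
  have hderiv : ∀ y ∈ uIcc x (x + ε), HasDerivWithinAt (fun y ↦ log (gaussianTail y))
      (-gaussianPDFReal 0 1 y / gaussianTail y) (uIcc x (x + ε)) y := fun y _ ↦
    ((hasDerivAt_gaussianTail y).log (gaussianTail_pos y).ne').hasDerivWithinAt
  have hbound : ∀ y ∈ uIcc x (x + ε),
      ‖-gaussianPDFReal 0 1 y / gaussianTail y‖ ≤ rexp (3 / 2) * (1 + x) := by
    intro y hy
    have hyx : |y| ≤ 1 + x := by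
      obtain ⟨hε₁, hε₂⟩ := abs_le.1 hε
      rw [abs_le]
      rcases mem_uIcc.1 hy with ⟨h₁, h₂⟩ | ⟨h₁, h₂⟩ <;> constructor <;> linarith
    rw [norm_div, norm_neg, Real.norm_of_nonneg (gaussianPDFReal_nonneg 0 1 y),
      Real.norm_of_nonneg (gaussianTail_pos y).le, div_le_iff₀ (gaussianTail_pos y)]
    exact gaussianPDFReal_le_mul_gaussianTail (by linarith) hyx
  have hmvt := Convex.norm_image_sub_le_of_norm_hasDerivWithin_le hderiv hbound
    (convex_uIcc _ _) left_mem_uIcc right_mem_uIcc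
  rwa [Real.norm_eq_abs, Real.norm_eq_abs, add_sub_cancel_left,
    ← log_div (gaussianTail_pos _).ne' (gaussianTail_pos _).ne'] at hmvt

theorem mul_exp_neg_le_and_le_mul_exp_of_abs_log_div_le {a b K : ℝ} (ha : 0 < a) (hb : 0 < b)
    (h : |log (b / a)| ≤ K) : a * rexp (-K) ≤ b ∧ b ≤ a * rexp K := by
  obtain ⟨hlower, hupper⟩ := abs_le.1 h
  have hb_eq : b = a * rexp (log (b / a)) := by rw [exp_log (div_pos hb ha)]; field_simp
  constructor
  · calc a * rexp (-K) ≤ a * rexp (log (b / a)) := by gcongr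
      _ = b := hb_eq.symm
  · calc b = a * rexp (log (b / a)) := hb_eq
      _ ≤ a * rexp K := by gcongr

/-- Shift stability of the Gaussian tail: there is an absolute constant `C > 0`
such that for all `x ≥ 0` and `|ε| ≤ 1`,
`(1 - Φ(x)) e^{-C(1+x)|ε|} ≤ 1 - Φ(x+ε) ≤ (1 - Φ(x)) e^{C(1+x)|ε|}`;
equivalently `|ln((1 - Φ(x+ε))/(1 - Φ(x)))| ≤ C (1+x) |ε|`. -/
theorem gaussian_tail_shift :
    ∃ C : ℝ, 0 < C ∧
      ∀ x ε : ℝ, 0 ≤ x → |ε| ≤ 1 →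
        ((1 - stdGaussCDF x) * Real.exp (-C * (1 + x) * |ε|) ≤ 1 - stdGaussCDF (x + ε) ∧
          1 - stdGaussCDF (x + ε) ≤ (1 - stdGaussCDF x) * Real.exp (C * (1 + x) * |ε|)) ∧
        |Real.log ((1 - stdGaussCDF (x + ε)) / (1 - stdGaussCDF x))| ≤
          C * (1 + x) * |ε| := by
  refine ⟨rexp (3 / 2), exp_pos _, fun x ε hx hε ↦ ?_⟩
  have hlog := abs_log_gaussianTail_div_le hx hε
  simp only [one_sub_stdGaussCDF, neg_mul]
  exact ⟨mul_exp_neg_le_and_le_mul_exp_of_abs_log_div_le (gaussianTail_pos x)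
    (gaussianTail_pos (x + ε)) hlog, hlog⟩

end
end
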